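/- Fix real constants k1, k2. Let m, b_1, b_2, P_2 : ℝ² → ℝ be smooth functions of (x, t) with P_{2,x} = m b_{2,x}, satisfying the 2-nd gCH equation: m_t = k1 (m P_2)_x + (1/2) k2 (2 m b_{2,x} + m_x b_2); b_{2,x} − b_{2,xxx} = (1/2) k1 [m (b_1² − b_{1,x}²)]_x + (1/2) k2 (2 m b_{1,x} + m_x b_1); and m = b_1 − b_{1,xx}. Set P_1 = (1/2)(b_1² − b_{1,x}²) (so that P_{1,x} = m b_{1,x}). Then for every real λ ≠ 0 the zero-curvature equation U_t − V_x + U V − V U = 0 holds pointwise on ℝ², where V = U + W[b_2, P_2] + λ^{−2} W[b_1, P_1]. -/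

import Mathlib

open Matrix Finset

/-- Partial derivative in the first (x) variable. -/
noncomputable def dX (f : ℝ → ℝ → ℝ) : ℝ → ℝ → ℝ := fun x t => deriv (fun x' => f x' t) x

/-- Partial derivative in the second (t) variable. -/
noncomputable def dT (f : ℝ → ℝ → ℝ) : ℝ → ℝ → ℝ := fun x t => deriv (fun t' => f x t') t

/-- Smoothness of a function of two real variables. -/
def Smooth2 (f : ℝ → ℝ → ℝ) : Prop := ContDiff ℝ (⊤ : ℕ∞) (fun p : ℝ × ℝ => f p.1 p.2)

/-- Entrywise partial derivative in x of a matrix-valued function. -/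
noncomputable def mdX (M : ℝ → ℝ → Matrix (Fin 2) (Fin 2) ℝ) :
    ℝ → ℝ → Matrix (Fin 2) (Fin 2) ℝ :=
  fun x t => Matrix.of fun i j => deriv (fun x' => M x' t i j) x

/-- Entrywise partial derivative in t of a matrix-valued function. -/
noncomputable def mdT (M : ℝ → ℝ → Matrix (Fin 2) (Fin 2) ℝ) :
    ℝ → ℝ → Matrix (Fin 2) (Fin 2) ℝ :=
  fun x t => Matrix.of fun i j => deriv (fun t' => M x t' i j) t

/-- The gCH spatial Lax matrix U(λ) = (1/2)[[−1, λm],[−k1λm−k2λ, 1]]. -/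
noncomputable def GU (lam k1 k2 : ℝ) (m : ℝ → ℝ → ℝ) : ℝ → ℝ → Matrix (Fin 2) (Fin 2) ℝ :=
  fun x t => (1/2 : ℝ) • !![-1, lam * m x t; -(k1 * lam * m x t) - k2 * lam, 1]

/-- The matrix W[b,P](λ) = −(1/2)[[A,B],[C,−A]] of the gCH hierarchy. -/
noncomputable def GW (lam k1 k2 : ℝ) (m b P : ℝ → ℝ → ℝ) : ℝ → ℝ → Matrix (Fin 2) (Fin 2) ℝ :=
  fun x t =>
    (-(1/2) : ℝ) •
      !![lam ^ (-2 : ℤ) + k1 * P x t + (1/2) * k2 * (b x t - dX b x t) - 1,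
         -(lam⁻¹) * (m x t - dX b x t + dX (dX b) x t)
           + lam * m x t * (-(k1 * P x t) - (1/2) * k2 * b x t + 1);
         lam⁻¹ * (k1 * (m x t + dX (dX b) x t + dX b x t) + k2)
           - lam * (k1 * m x t + k2) * (-(k1 * P x t) - (1/2) * k2 * b x t + 1),
         -(lam ^ (-2 : ℤ) + k1 * P x t + (1/2) * k2 * (b x t - dX b x t) - 1)]


section Aux

lemma Smooth2.sliceX {f} (hf : Smooth2 f) (t : ℝ) : ContDiff ℝ (⊤ : ℕ∞) (fun x => f x t) :=
  hf.comp (contDiff_id.prodMk contDiff_const)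

lemma Smooth2.sliceT {f} (hf : Smooth2 f) (x : ℝ) : ContDiff ℝ (⊤ : ℕ∞) (fun t => f x t) :=
  hf.comp (contDiff_const.prodMk contDiff_id)

lemma Smooth2.hasX {f} (hf : Smooth2 f) (x t : ℝ) :
    HasDerivAt (fun x' => f x' t) (dX f x t) x :=
  (((hf.sliceX t).differentiable (by simp)) x).hasDerivAt

lemma Smooth2.hasT {f} (hf : Smooth2 f) (x t : ℝ) :
    HasDerivAt (fun t' => f x t') (dT f x t) t :=
  (((hf.sliceT x).differentiable (by simp)) t).hasDerivAt

lemma Smooth2.dX {f} (hf : Smooth2 f) : Smooth2 (_root_.dX f) := by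
  have key : ∀ x t : ℝ, _root_.dX f x t
      = fderiv ℝ (fun p : ℝ × ℝ => f p.1 p.2) (x, t) (1, 0) := by
    intro x t
    have h1 : HasDerivAt (fun x' : ℝ => (x', t)) ((1 : ℝ), (0 : ℝ)) x :=
      (hasDerivAt_id x).prodMk (hasDerivAt_const x t)
    have h2 : HasFDerivAt (fun p : ℝ × ℝ => f p.1 p.2)
        (fderiv ℝ (fun p : ℝ × ℝ => f p.1 p.2) (x, t)) (x, t) :=
      (hf.differentiable (by simp) (x, t)).hasFDerivAt
    exact (h2.comp_hasDerivAt x h1).deriv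
  have h : Smooth2 fun x t =>
      fderiv ℝ (fun p : ℝ × ℝ => f p.1 p.2) (x, t) (1, 0) :=
    (hf.fderiv_right ((by simp))).clm_apply contDiff_const
  unfold Smooth2 at h ⊢
  convert h using 2 with p
  exact key p.1 p.2

lemma derivX_eq_dX (f : ℝ → ℝ → ℝ) (x t : ℝ) :
    deriv (fun x' => f x' t) x = dX f x t := rfl

lemma derivT_eq_dT (f : ℝ → ℝ → ℝ) (x t : ℝ) :
    deriv (fun t' => f x t') t = dT f x t := rfl

end Aux

set_option maxHeartbeats 4000000 in
/-- the 2-nd gCH equation admits the zero-curvature (Lax)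
representation `U_t − V_x + U V − V U = 0` with
`V = U + W[b₂, P₂] + λ⁻² W[b₁, P₁]`, `P₁ = (1/2)(b₁² − b₁ₓ²)`. -/
theorem second_gCH_zero_curvature
    (k1 k2 : ℝ) (m b1 b2 P2 : ℝ → ℝ → ℝ)
    (hm : Smooth2 m) (hb1 : Smooth2 b1) (hb2 : Smooth2 b2) (hP2 : Smooth2 P2)
    (hP2x : ∀ x t, dX P2 x t = m x t * dX b2 x t)
    (hev : ∀ x t, dT m x t
        = k1 * dX (fun x t => m x t * P2 x t) x t
          + (1/2) * k2 * (2 * m x t * dX b2 x t + dX m x t * b2 x t))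
    (h2 : ∀ x t, dX b2 x t - dX (dX (dX b2)) x t
        = (1/2) * k1 * dX (fun x t => m x t * (b1 x t ^ 2 - dX b1 x t ^ 2)) x t
          + (1/2) * k2 * (2 * m x t * dX b1 x t + dX m x t * b1 x t))
    (hmb : ∀ x t, m x t = b1 x t - dX (dX b1) x t)
    (lam : ℝ) (hlam : lam ≠ 0) :
    ∀ x t,
      mdT (GU lam k1 k2 m) x t
        - mdX (fun x t => GU lam k1 k2 m x t + GW lam k1 k2 m b2 P2 x t
            + lam ^ (-2 : ℤ) •
                GW lam k1 k2 m b1 (fun x t => (1/2) * (b1 x t ^ 2 - dX b1 x t ^ 2)) x t) x t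
        + GU lam k1 k2 m x t *
            (GU lam k1 k2 m x t + GW lam k1 k2 m b2 P2 x t
              + lam ^ (-2 : ℤ) •
                  GW lam k1 k2 m b1 (fun x t => (1/2) * (b1 x t ^ 2 - dX b1 x t ^ 2)) x t)
        - (GU lam k1 k2 m x t + GW lam k1 k2 m b2 P2 x t
              + lam ^ (-2 : ℤ) •
                  GW lam k1 k2 m b1 (fun x t => (1/2) * (b1 x t ^ 2 - dX b1 x t ^ 2)) x t) *
            GU lam k1 k2 m x t
      = 0 := by
  intro x t
  have Hm := hm.hasX x t
  have HmT := hm.hasT x t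
  have Hb2 := hb2.hasX x t
  have Hb2x := (hb2.dX).hasX x t
  have Hb2xx := (hb2.dX.dX).hasX x t
  have HP2 := hP2.hasX x t
  have Hb1 := hb1.hasX x t
  have Hb1x := (hb1.dX).hasX x t
  have Hb1xx := (hb1.dX.dX).hasX x t
  have dm : DifferentiableAt ℝ (fun x' => m x' t) x := Hm.differentiableAt
  have dmT : DifferentiableAt ℝ (fun t' => m x t') t := HmT.differentiableAt
  have db2 : DifferentiableAt ℝ (fun x' => b2 x' t) x := Hb2.differentiableAt
  have db2x : DifferentiableAt ℝ (fun x' => dX b2 x' t) x := Hb2x.differentiableAt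
  have db2xx : DifferentiableAt ℝ (fun x' => dX (dX b2) x' t) x := Hb2xx.differentiableAt
  have dP2 : DifferentiableAt ℝ (fun x' => P2 x' t) x := HP2.differentiableAt
  have db1 : DifferentiableAt ℝ (fun x' => b1 x' t) x := Hb1.differentiableAt
  have db1x : DifferentiableAt ℝ (fun x' => dX b1 x' t) x := Hb1x.differentiableAt
  have db1xx : DifferentiableAt ℝ (fun x' => dX (dX b1) x' t) x := Hb1xx.differentiableAt
  -- x-derivative of m = b1 - b1_xx
  have hmx : dX m x t = dX b1 x t - dX (dX (dX b1)) x t := by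
    show deriv (fun x' => m x' t) x = _
    have hfun : (fun x' => m x' t) = fun x' => b1 x' t - dX (dX b1) x' t :=
      funext fun x' => hmb x' t
    rw [hfun]
    exact (Hb1.sub Hb1xx).deriv
  -- evolution equation with product rule expanded
  have e1 : dT m x t
      = k1 * (dX m x t * P2 x t + m x t * (m x t * dX b2 x t))
        + (1/2) * k2 * (2 * m x t * dX b2 x t + dX m x t * b2 x t) := by
    have h := hev x t
    have hprod : dX (fun x t => m x t * P2 x t) x t
        = dX m x t * P2 x t + m x t * dX P2 x t := (Hm.mul HP2).deriv
    rw [hprod, hP2x x t] at h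
    exact h
  -- third x-derivative of b2 from the 2nd equation, product rule expanded
  have e2 : dX (dX (dX b2)) x t
      = dX b2 x t
        - ((1/2) * k1 * (dX m x t * (b1 x t ^ 2 - dX b1 x t ^ 2)
              + m x t * (2 * b1 x t * dX b1 x t - 2 * dX b1 x t * dX (dX b1) x t))
          + (1/2) * k2 * (2 * m x t * dX b1 x t + dX m x t * b1 x t)) := by
    have h := h2 x t
    have hprod : dX (fun x t => m x t * (b1 x t ^ 2 - dX b1 x t ^ 2)) x t
        = dX m x t * (b1 x t ^ 2 - dX b1 x t ^ 2)
          + m x t * (2 * b1 x t * dX b1 x t - 2 * dX b1 x t * dX (dX b1) x t) := by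
      have := (Hm.mul ((Hb1.pow 2).sub (Hb1x.pow 2))).deriv
      refine this.trans ?_
      push_cast
      simp only [Pi.sub_apply, Pi.pow_apply]
      ring
    rw [hprod] at h
    linarith [h]
  have hmbx := hmb x t
  ext i j
  fin_cases i <;> fin_cases j <;>
  · simp only [mdT, mdX, GU, GW, Matrix.sub_apply, Matrix.add_apply, Matrix.smul_apply,
      Matrix.mul_apply, Fin.sum_univ_two, Matrix.of_apply, Matrix.cons_val', Matrix.cons_val_zero,
      Matrix.cons_val_one, Matrix.head_cons, Matrix.head_fin_const, Matrix.empty_val',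
      Matrix.cons_val_fin_one, Matrix.zero_apply, smul_eq_mul, Fin.mk_zero, Fin.mk_one]
    simp (disch := first | assumption | fun_prop) only [deriv_fun_add, deriv_fun_sub, deriv_fun_mul,
      deriv_const_mul_field', deriv_mul_const_field', deriv_const', deriv.fun_neg', deriv_fun_pow,
      deriv_sub_const, deriv_const_add, deriv_add_const,
      mul_zero, zero_mul, zero_add, add_zero, neg_zero, sub_zero, zero_sub]
    simp only [derivX_eq_dX, derivT_eq_dT]
    simp only [e1, e2, hP2x, hmx, hmbx]
    rw [show lam ^ (-2 : ℤ) = (lam ^ 2)⁻¹ by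
      norm_num [_root_.zpow_neg, zpow_ofNat]]
    field_simp
    ring
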